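/- If N is an odd perfect number and q^α exactly divides N with q prime, then σ(N/q^α)/q^α ≠ 1. -/

import Mathlib

/-!
Write `N = q ^ α * m` with `q ∤ m`. Since `q ∤ σ(q ^ α)`, perfection `σ(q ^ α) σ(m) = 2 q ^ α m`
forces `q ^ α ∣ σ(m)`, so a ratio `1` means `σ(m) = q ^ α` and `σ(q ^ α) = 2 m`.
The second equation makes `α + 1 = 2 j` even, and then `2 m = A (q ^ j + 1)` with
`A = 1 + q + ⋯ + q ^ (j - 1)`, so `m = A C` with `C = (q ^ j + 1) / 2`; `A` and `C` are coprime
because `A` is odd and `q ^ j + 1 ≡ 2 [MOD A]`. Now `σ(A) σ(C) = q ^ (2 j - 1)`, so both factors are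
powers of `q`; for `j ≥ 2` both exceed `q ^ (j - 1)`, hence are at least `q ^ j`, which is too much.
For `j = 1` we get `σ(m) = q = 2 m - 1` prime, so `m = p ^ e` is a prime power, and
`1 + p + ⋯ + p ^ e = 2 p ^ e - 1` forces `p ∣ 2`.
-/

open ArithmeticFunction Finset
open scoped ArithmeticFunction.sigma

lemma le_sigma_one {n : ℕ} (hn : n ≠ 0) : n ≤ σ 1 n := by
  rw [sigma_one_apply]
  exact single_le_sum (f := fun d ↦ d) (fun _ _ ↦ Nat.zero_le _) (Nat.mem_divisors_self n hn)

lemma geom_sum_add_self {R : Type*} [CommSemiring R] (x : R) (j : ℕ) :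
    ∑ i ∈ range (j + j), x ^ i = (∑ i ∈ range j, x ^ i) * (x ^ j + 1) := by
  simp only [sum_range_add, pow_add, ← mul_sum]
  ring

lemma pow_lt_geom_sum {q i : ℕ} (hi : i ≠ 0) : q ^ i < ∑ l ∈ range (i + 1), q ^ l := by
  have : q ^ 0 ≤ ∑ l ∈ range i, q ^ l :=
    single_le_sum (f := (q ^ ·)) (fun _ _ ↦ Nat.zero_le _) (mem_range.mpr (Nat.pos_of_ne_zero hi))
  rw [geom_sum_succ']
  simp only [pow_zero] at this
  omega

lemma even_geom_sum_iff {q : ℕ} (hq : Odd q) (t : ℕ) :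
    Even (∑ i ∈ range t, q ^ i) ↔ Even t := by
  induction t with
  | zero => simp
  | succ t ih => simp [sum_range_succ, Nat.even_add, ih, Nat.even_add_one, Nat.not_even_iff_odd.mpr hq.pow]

lemma coprime_geom_sum_pow_add_one {q j : ℕ} (hq : q ≠ 0) (hodd : Odd (∑ i ∈ range j, q ^ i)) :
    Nat.Coprime (∑ i ∈ range j, q ^ i) (q ^ j + 1) := by
  obtain ⟨x, rfl⟩ := Nat.exists_eq_add_one_of_ne_zero hq
  rw [← geom_sum_mul_add x j, add_assoc, add_comm (_ * x), Nat.coprime_add_mul_left_right]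
  exact hodd.coprime_two_right

lemma Nat.Prime.not_dvd_sigma_one_pow {q : ℕ} (hq : q.Prime) (k : ℕ) : ¬ q ∣ σ 1 (q ^ k) := by
  rw [sigma_one_apply_prime_pow hq, geom_sum_succ, Nat.dvd_add_right (dvd_mul_right _ _)]
  exact hq.not_dvd_one

lemma Nat.Prime.sigma_one_pow_add_one_ne_two_mul {p e : ℕ} (hp : p.Prime) (hp2 : p ≠ 2)
    (he : e ≠ 0) : σ 1 (p ^ e) + 1 ≠ 2 * p ^ e := by
  intro h
  have hdvd : p ∣ σ 1 (p ^ e) + 1 := h ▸ dvd_mul_of_dvd_right (dvd_pow_self p he) 2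
  rw [sigma_one_apply_prime_pow hp, geom_sum_succ, add_assoc,
    Nat.dvd_add_right (dvd_mul_right _ _)] at hdvd
  exact hp2 ((Nat.prime_dvd_prime_iff_eq hp Nat.prime_two).mp hdvd)

lemma isPrimePow_of_prime_sigma_one {n : ℕ} (h : (σ 1 n).Prime) : IsPrimePow n := by
  have hn0 : n ≠ 0 := by rintro rfl; exact Nat.not_prime_zero (by simpa using h)
  have hn1 : n ≠ 1 := by rintro rfl; exact Nat.not_prime_one (by simpa using h)
  set p := n.minFac
  have hp : p.Prime := Nat.minFac_prime hn1
  have he : 0 < n.factorization p := hp.factorization_pos_of_dvd hn0 (Nat.minFac_dvd n)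
  have hsplit := Nat.ordProj_mul_ordCompl_eq_self n p
  rw [← hsplit, isMultiplicative_sigma.map_mul_of_coprime
    ((Nat.coprime_ordCompl hp hn0).pow_left _), Nat.prime_mul_iff, sigma_eq_one_iff,
    sigma_eq_one_iff] at h
  rcases h with ⟨-, hcompl⟩ | ⟨-, hpow⟩
  · rw [← hsplit, hcompl, mul_one]
    exact ⟨p, _, hp.prime, he, rfl⟩
  · exact absurd hpow (Nat.one_lt_pow he.ne' hp.one_lt).ne'

lemma sigma_one_add_one_ne_two_mul_of_prime {m : ℕ} (hm : Odd m) (h : (σ 1 m).Prime) :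
    σ 1 m + 1 ≠ 2 * m := by
  obtain ⟨p, e, hp, he, rfl⟩ := (isPrimePow_nat_iff m).mp (isPrimePow_of_prime_sigma_one h)
  have hp2 : p ≠ 2 := by
    rintro rfl
    exact Nat.not_even_iff_odd.mpr hm (Nat.even_pow.mpr ⟨even_two, he.ne'⟩)
  exact hp.sigma_one_pow_add_one_ne_two_mul hp2 he.ne'

lemma two_mul_add_two_le_of_mul_eq_prime_pow {q x y k i : ℕ} (hq : q.Prime)
    (h : x * y = q ^ k) (hx : q ^ i < x) (hy : q ^ i < y) : 2 * i + 2 ≤ k := by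
  obtain ⟨a, -, rfl⟩ := (Nat.dvd_prime_pow hq).mp (Dvd.intro y h)
  obtain ⟨b, -, rfl⟩ := (Nat.dvd_prime_pow hq).mp (Dvd.intro_left _ h)
  rw [← pow_add] at h
  have hab := Nat.pow_right_injective hq.two_le h
  rw [Nat.pow_lt_pow_iff_right hq.one_lt] at hx hy
  omega

lemma Nat.Perfect.sigma_one_mul_sigma_one {a b : ℕ} (h : (a * b).Perfect) (hab : a.Coprime b) :
    σ 1 a * σ 1 b = 2 * (a * b) := by
  rw [← isMultiplicative_sigma.map_mul_of_coprime hab, sigma_one_apply]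
  exact (Nat.perfect_iff_sum_divisors_eq_two_mul h.2).mp h

lemma sigma_one_ne_pow_of_sigma_one_pow_eq_two_mul {q α m : ℕ} (hq : q.Prime) (hm : Odd m)
    (hσq : σ 1 (q ^ α) = 2 * m) : σ 1 m ≠ q ^ α := by
  intro hσm
  have hq_odd : Odd q := hq.eq_two_or_odd'.resolve_left <| by
    rintro rfl
    exact hq.not_dvd_sigma_one_pow α (hσq ▸ dvd_mul_right 2 m)
  rw [sigma_one_apply_prime_pow hq] at hσq
  obtain ⟨j, hj⟩ : Even (α + 1) := by
    rw [← even_geom_sum_iff hq_odd, hσq]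
    exact even_two_mul m
  obtain ⟨C, hC⟩ := hq_odd.pow (n := j).add_one
  rw [hj, geom_sum_add_self, hC] at hσq
  set A := ∑ i ∈ range j, q ^ i
  have hm_eq : m = A * C := by linarith
  have hA_odd : Odd A := hm.of_dvd_nat (Dvd.intro C hm_eq.symm)
  have hAC : Nat.Coprime A C :=
    (coprime_geom_sum_pow_add_one hq.ne_zero hA_odd).coprime_dvd_right ⟨2, by omega⟩
  have hσAC : σ 1 A * σ 1 C = q ^ α := by
    rw [← isMultiplicative_sigma.map_mul_of_coprime hAC, ← hm_eq, hσm]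
  obtain ⟨i, rfl⟩ : ∃ i, j = i + 1 := Nat.exists_eq_add_one_of_ne_zero (by omega)
  rcases eq_or_ne i 0 with rfl | hi
  · have hA : A = 1 := by simp [A]
    obtain rfl : α = 1 := by omega
    rw [hA, one_mul] at hm_eq
    rw [pow_one] at hC hσm
    subst hm_eq
    exact sigma_one_add_one_ne_two_mul_of_prime hm (hσm ▸ hq) (by omega)
  · have hq3 : 3 ≤ q := by obtain ⟨k, rfl⟩ := hq_odd; have := hq.two_le; omega
    have hA : q ^ i < A := pow_lt_geom_sum hi
    have hC : q ^ i < C := by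
      rw [pow_succ] at hC
      nlinarith [pow_pos hq.pos i]
    have := two_mul_add_two_le_of_mul_eq_prime_pow hq hσAC
      (hA.trans_le (le_sigma_one (by omega))) (hC.trans_le (le_sigma_one (by omega)))
    omega

theorem opn_ratio_ne_one_general (N q α : ℕ) (hN : N.Perfect) (hNodd : Odd N)
    (hq : q.Prime)
    (hdvd : q ^ α ∣ N) (hndvd : ¬ q ^ (α + 1) ∣ N) :
    (ArithmeticFunction.sigma 1 (N / q ^ α)) / q ^ α ≠ 1 := by
  obtain ⟨m, rfl⟩ := hdvd
  have hq_m : ¬ q ∣ m := fun h ↦ hndvd (pow_succ q α ▸ mul_dvd_mul_left _ h)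
  have hσ := hN.sigma_one_mul_sigma_one ((hq.coprime_iff_not_dvd.mpr hq_m).pow_left α)
  have hdvdσ : q ^ α ∣ σ 1 m :=
    ((hq.coprime_iff_not_dvd.mpr (hq.not_dvd_sigma_one_pow α)).pow_left α).dvd_of_dvd_mul_left
      (hσ ▸ Dvd.intro (2 * m) (by ring))
  have hqα : 0 < q ^ α := pow_pos hq.pos α
  rw [Nat.mul_div_cancel_left m hqα, Ne, Nat.div_eq_iff_eq_mul_left hqα hdvdσ, one_mul]
  intro hσm
  refine sigma_one_ne_pow_of_sigma_one_pow_eq_two_mul hq (Nat.Odd.of_mul_right hNodd) ?_ hσm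
  rw [hσm] at hσ
  exact Nat.eq_of_mul_eq_mul_right hqα (by linarith)

theorem opn_ratio_ne_one (N q α : ℕ) (hN : N.Perfect) (hNodd : Odd N)
    (hq : q.Prime) (hα : 1 ≤ α)
    (hdvd : q ^ α ∣ N) (hndvd : ¬ q ^ (α + 1) ∣ N) :
    (ArithmeticFunction.sigma 1 (N / q ^ α)) / q ^ α ≠ 1 :=
  opn_ratio_ne_one_general N q α hN hNodd hq hdvd hndvd
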